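/- arXiv:1412.6770 — 2 statements merged into one kernel-verified Lean document; each statement's English description precedes it below -/
import Mathlib

section
/- For a smooth, compactly supported divergence-free vector field v : ℝ³ → ℝ³, the trilinear integral satisfies the bound |∫_{ℝ³} ∂ᵢvⱼ ∂ᵢv_k ∂_k vⱼ dV| ≤ ‖v‖_{L³} · ‖∇v‖_{L⁶} · ‖Δv‖_{L²}, where repeated indices are summed. -/
open MeasureTheory

noncomputable def pd (i : Fin 3) (f : EuclideanSpace ℝ (Fin 3) → ℝ)
    (x : EuclideanSpace ℝ (Fin 3)) : ℝ :=
  fderiv ℝ f x (EuclideanSpace.single i 1)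

namespace TLH

abbrev E3 := EuclideanSpace ℝ (Fin 3)

/-- smooth with compact support -/
structure Reg (f : E3 → ℝ) : Prop where
  smooth : ContDiff ℝ (⊤ : ℕ∞) f
  supp : HasCompactSupport f

lemma Reg.cont {f : E3 → ℝ} (h : Reg f) : Continuous f := h.smooth.continuous

lemma Reg.diff {f : E3 → ℝ} (h : Reg f) (x : E3) : DifferentiableAt ℝ f x :=
  h.smooth.differentiable (by simp) x

lemma Reg.pd {f : E3 → ℝ} (h : Reg f) (i : Fin 3) : Reg (pd i f) := by
  constructor
  · exact (h.smooth.fderiv_right (by simp)).clm_apply contDiff_const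
  · have h1 : HasCompactSupport (fderiv ℝ f) := h.supp.fderiv ℝ
    exact h1.comp_left (g := fun L : E3 →L[ℝ] ℝ => L (EuclideanSpace.single i 1)) rfl

lemma Reg.mul {f g : E3 → ℝ} (hf : Reg f) (hg : Reg g) : Reg (fun x => f x * g x) :=
  ⟨hf.smooth.mul hg.smooth, hf.supp.mul_right⟩

lemma Reg.sum {ι : Type*} (s : Finset ι) {F : ι → E3 → ℝ} (h : ∀ j ∈ s, Reg (F j)) :
    Reg (fun x => ∑ j ∈ s, F j x) := by
  classical
  induction s using Finset.induction with
  | empty => exact ⟨by simpa using contDiff_const, by simp [HasCompactSupport, tsupport]⟩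
  | insert a s hni ih =>
      simp only [Finset.sum_insert hni]
      have h1 := h a (Finset.mem_insert_self a s)
      have h2 := ih (fun j hj => h j (Finset.mem_insert_of_mem hj))
      exact ⟨h1.smooth.add h2.smooth, h1.supp.add h2.supp⟩

lemma Reg.integrable {f : E3 → ℝ} (h : Reg f) : Integrable f :=
  h.cont.integrable_of_hasCompactSupport h.supp

/-- product rule -/
lemma pd_mul {f g : E3 → ℝ} (hf : Reg f) (hg : Reg g) (i : Fin 3) (x : E3) :
    pd i (fun y => f y * g y) x = pd i f x * g x + f x * pd i g x := by
  simp only [pd]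
  rw [fderiv_fun_mul (hf.diff x) (hg.diff x)]
  simp only [ContinuousLinearMap.add_apply, ContinuousLinearMap.coe_smul', Pi.smul_apply,
    smul_eq_mul]
  ring

/-- pd commutes with finite sums -/
lemma pd_sum {ι : Type*} (s : Finset ι) {F : ι → E3 → ℝ} (h : ∀ j ∈ s, Reg (F j))
    (i : Fin 3) (x : E3) :
    pd i (fun y => ∑ j ∈ s, F j y) x = ∑ j ∈ s, pd i (F j) x := by
  simp only [pd]
  rw [fderiv_fun_sum (fun j hj => (h j hj).diff x)]
  simp

/-- symmetry of second derivatives -/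
lemma pd_comm {f : E3 → ℝ} (hf : Reg f) (i k : Fin 3) (x : E3) :
    pd i (pd k f) x = pd k (pd i f) x := by
  have hd : ∀ y, HasFDerivAt f (fderiv ℝ f y) y := fun y => (hf.diff y).hasFDerivAt
  have hd2 : DifferentiableAt ℝ (fderiv ℝ f) x :=
    (hf.smooth.fderiv_right (m := (⊤ : ℕ∞)) (by simp)).differentiable (by simp) x
  have hsymm := second_derivative_symmetric hd hd2.hasFDerivAt
    (EuclideanSpace.single i 1) (EuclideanSpace.single k 1)
  have key : ∀ a b : Fin 3, pd a (pd b f) x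
      = fderiv ℝ (fderiv ℝ f) x (EuclideanSpace.single a 1) (EuclideanSpace.single b 1) := by
    intro a b
    have : pd b f = fun y => (fderiv ℝ f y) (EuclideanSpace.single b 1) := rfl
    rw [show pd a (pd b f) x = fderiv ℝ (fun y => (fderiv ℝ f y) (EuclideanSpace.single b 1)) x
        (EuclideanSpace.single a 1) from rfl]
    rw [fderiv_clm_apply hd2 (differentiableAt_const _)]
    simp
  rw [key i k, key k i, hsymm]

/-- integration by parts -/
lemma ibp {f g : E3 → ℝ} (hf : Reg f) (hg : Reg g) (i : Fin 3) :
    ∫ x, pd i f x * g x = - ∫ x, f x * pd i g x := by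
  obtain ⟨C, hCf⟩ := hf.smooth.lipschitzWith_of_hasCompactSupport hf.supp (by simp)
  obtain ⟨D, hCg⟩ := hg.smooth.lipschitzWith_of_hasCompactSupport hg.supp (by simp)
  have A := LipschitzWith.integral_lineDeriv_mul_eq (μ := volume) hCf hCg hg.supp (EuclideanSpace.single i 1)
  have h1 : ∀ x : E3, lineDeriv ℝ f x (EuclideanSpace.single i 1) = pd i f x := fun x =>
    (hf.diff x).lineDeriv_eq_fderiv
  have h2 : ∀ x : E3, lineDeriv ℝ g x (-(EuclideanSpace.single i 1)) = - pd i g x := fun x => by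
    rw [(hg.diff x).lineDeriv_eq_fderiv, map_neg]; rfl
  simp only [h1, h2, neg_mul] at A
  rw [A, ← integral_neg]
  congr 1; ext x; ring

end TLH

namespace TLH

variable {v : E3 → E3}

noncomputable def Wf (v : E3 → E3) (i j : Fin 3) : E3 → ℝ := pd i (fun y => v y j)
noncomputable def Lf (v : E3 → E3) (j : Fin 3) : E3 → ℝ := fun x => ∑ i, pd i (Wf v i j) x

lemma regW (hv : ∀ j, Reg (fun y => v y j)) (i j : Fin 3) : Reg (Wf v i j) := (hv j).pd i

lemma regL (hv : ∀ j, Reg (fun y => v y j)) (j : Fin 3) : Reg (Lf v j) :=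
  Reg.sum Finset.univ (fun i _ => (regW hv i j).pd i)

lemma claim1 (hv : ∀ j, Reg (fun y => v y j)) (hdiv : ∀ x, ∑ i, Wf v i i x = 0) :
    ∫ x, ∑ i, ∑ j, ∑ k, Wf v i j x * Wf v i k x * Wf v k j x
      = - ∫ x, ∑ j, ∑ k, v x k * Lf v j x * Wf v k j x := by
  classical
  have hW : ∀ i j, Reg (Wf v i j) := regW hv
  have hpdW : ∀ a i j : Fin 3, Reg (pd a (Wf v i j)) := fun a i j => (hW i j).pd a
  set g : Fin 3 → Fin 3 → E3 → ℝ := fun i k x => ∑ j, Wf v i j x * Wf v k j x with hgdef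
  have hg : ∀ i k, Reg (g i k) := fun i k =>
    Reg.sum Finset.univ (fun j _ => (hW i j).mul (hW k j))
  -- step 1 : LHS = ∑ i, ∑ k, ∫ Wik * g i k
  have step1 : ∫ x, ∑ i, ∑ j, ∑ k, Wf v i j x * Wf v i k x * Wf v k j x
      = ∑ i : Fin 3, ∑ k : Fin 3, ∫ x, Wf v i k x * g i k x := by
    have int_ik : ∀ i k : Fin 3, Integrable (fun x => Wf v i k x * g i k x) :=
      fun i k => ((hW i k).mul (hg i k)).integrable
    calc ∫ x, ∑ i : Fin 3, ∑ j : Fin 3, ∑ k : Fin 3, Wf v i j x * Wf v i k x * Wf v k j x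
        = ∫ x, ∑ i : Fin 3, ∑ k : Fin 3, Wf v i k x * g i k x := by
          apply integral_congr_ae; filter_upwards with x
          simp only [hgdef, Fin.sum_univ_three]; ring
      _ = ∑ i : Fin 3, ∫ x, ∑ k : Fin 3, Wf v i k x * g i k x :=
          integral_finset_sum _ (fun i _ => integrable_finset_sum _ (fun k _ => int_ik i k))
      _ = ∑ i : Fin 3, ∑ k : Fin 3, ∫ x, Wf v i k x * g i k x :=
          Finset.sum_congr rfl fun i _ => integral_finset_sum _ (fun k _ => int_ik i k)
  -- step 2 : ibp each
  have step2 : ∀ i k : Fin 3, ∫ x, Wf v i k x * g i k x = - ∫ x, v x k * pd i (g i k) x :=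
    fun i k => ibp (hv k) (hg i k) i
  -- derivative of g
  have step3 : ∀ i k : Fin 3, ∀ x, pd i (g i k) x
      = (∑ j, pd i (Wf v i j) x * Wf v k j x) + (∑ j, Wf v i j x * pd i (Wf v k j) x) := by
    intro i k x
    rw [show g i k = fun y => ∑ j, Wf v i j y * Wf v k j y from rfl,
      pd_sum Finset.univ (fun j _ => (hW i j).mul (hW k j))]
    rw [← Finset.sum_add_distrib]
    exact Finset.sum_congr rfl fun j _ => pd_mul (hW i j) (hW k j) i x
  -- symmetry
  have hsym : ∀ i k j : Fin 3, ∀ x, pd i (Wf v k j) x = pd k (Wf v i j) x := by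
    intro i k j x
    exact pd_comm (hv j) i k x
  -- the two pieces
  set P : Fin 3 → Fin 3 → ℝ :=
    fun i k => ∫ x, v x k * ∑ j, pd i (Wf v i j) x * Wf v k j x with hPdef
  set Q : Fin 3 → Fin 3 → ℝ :=
    fun i k => ∫ x, v x k * ∑ j, Wf v i j x * pd i (Wf v k j) x with hQdef
  have regA : ∀ i k : Fin 3, Reg (fun x => v x k * ∑ j, pd i (Wf v i j) x * Wf v k j x) :=
    fun i k => (hv k).mul (Reg.sum Finset.univ (fun j _ => (hpdW i i j).mul (hW k j)))
  have regB : ∀ i k : Fin 3, Reg (fun x => v x k * ∑ j, Wf v i j x * pd i (Wf v k j) x) :=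
    fun i k => (hv k).mul (Reg.sum Finset.univ (fun j _ => (hW i j).mul (hpdW i k j)))
  have step4 : ∀ i k : Fin 3, ∫ x, Wf v i k x * g i k x = - P i k - Q i k := by
    intro i k
    rw [step2 i k, hPdef, hQdef]
    have hpt : ∀ x : E3, v x k * pd i (g i k) x
        = v x k * (∑ j, pd i (Wf v i j) x * Wf v k j x)
          + v x k * (∑ j, Wf v i j x * pd i (Wf v k j) x) := by
      intro x; rw [step3 i k x]; ring
    rw [integral_congr_ae (Filter.Eventually.of_forall hpt),
      integral_add (regA i k).integrable (regB i k).integrable]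
    ring
  -- the A part
  have hA : ∑ i : Fin 3, ∑ k : Fin 3, P i k
      = ∫ x, ∑ j, ∑ k, v x k * Lf v j x * Wf v k j x := by
    rw [hPdef]
    calc ∑ i : Fin 3, ∑ k : Fin 3, ∫ x, v x k * ∑ j, pd i (Wf v i j) x * Wf v k j x
        = ∑ i : Fin 3, ∫ x, ∑ k : Fin 3, v x k * ∑ j, pd i (Wf v i j) x * Wf v k j x :=
          Finset.sum_congr rfl fun i _ =>
            (integral_finset_sum _ (fun k _ => (regA i k).integrable)).symm
      _ = ∫ x, ∑ i : Fin 3, ∑ k : Fin 3, v x k * ∑ j, pd i (Wf v i j) x * Wf v k j x :=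
          (integral_finset_sum _ (fun i _ =>
            integrable_finset_sum _ (fun k _ => (regA i k).integrable))).symm
      _ = ∫ x, ∑ j, ∑ k, v x k * Lf v j x * Wf v k j x := by
          apply integral_congr_ae; filter_upwards with x
          simp only [Lf, Fin.sum_univ_three]; ring
  -- the B part vanishes
  have hB : ∑ i : Fin 3, ∑ k : Fin 3, Q i k = 0 := by
    set G2 : E3 → ℝ := fun x => ∑ i : Fin 3, ∑ j : Fin 3, Wf v i j x * Wf v i j x with hG2def
    have regG2 : Reg G2 := Reg.sum Finset.univ (fun i _ =>
      Reg.sum Finset.univ (fun j _ => (hW i j).mul (hW i j)))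
    have hG2d : ∀ (k : Fin 3) (x : E3), pd k G2 x
        = ∑ i : Fin 3, ∑ j : Fin 3,
            (pd k (Wf v i j) x * Wf v i j x + Wf v i j x * pd k (Wf v i j) x) := by
      intro k x
      rw [show G2 = fun y => ∑ i : Fin 3, (fun z => ∑ j : Fin 3, Wf v i j z * Wf v i j z) y
          from rfl,
        pd_sum Finset.univ (fun i _ =>
          Reg.sum Finset.univ (fun j _ => (hW i j).mul (hW i j)))]
      refine Finset.sum_congr rfl fun i _ => ?_
      rw [pd_sum Finset.univ (fun j _ => (hW i j).mul (hW i j))]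
      exact Finset.sum_congr rfl fun j _ => pd_mul (hW i j) (hW i j) k x
    have key : ∀ (k : Fin 3) (x : E3),
        ∑ i : Fin 3, ∑ j : Fin 3, Wf v i j x * pd i (Wf v k j) x = 2⁻¹ * pd k G2 x := by
      intro k x
      have h1 : ∑ i : Fin 3, ∑ j : Fin 3, Wf v i j x * pd i (Wf v k j) x
          = ∑ i : Fin 3, ∑ j : Fin 3, Wf v i j x * pd k (Wf v i j) x :=
        Finset.sum_congr rfl fun i _ => Finset.sum_congr rfl fun j _ => by
          rw [hsym i k j x]
      rw [h1, hG2d k x, Finset.mul_sum]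
      refine Finset.sum_congr rfl fun i _ => ?_
      rw [Finset.mul_sum]
      exact Finset.sum_congr rfl fun j _ => by ring
    -- rewrite B as single integral
    have hQsum : ∑ i : Fin 3, ∑ k : Fin 3, Q i k
        = ∫ x, ∑ k : Fin 3, v x k * (2⁻¹ * pd k G2 x) := by
      rw [hQdef]
      calc ∑ i : Fin 3, ∑ k : Fin 3, ∫ x, v x k * ∑ j, Wf v i j x * pd i (Wf v k j) x
          = ∑ i : Fin 3, ∫ x, ∑ k : Fin 3, v x k * ∑ j, Wf v i j x * pd i (Wf v k j) x :=
            Finset.sum_congr rfl fun i _ =>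
              (integral_finset_sum _ (fun k _ => (regB i k).integrable)).symm
        _ = ∫ x, ∑ i : Fin 3, ∑ k : Fin 3, v x k * ∑ j, Wf v i j x * pd i (Wf v k j) x :=
            (integral_finset_sum _ (fun i _ =>
              integrable_finset_sum _ (fun k _ => (regB i k).integrable))).symm
        _ = ∫ x, ∑ k : Fin 3, v x k * (2⁻¹ * pd k G2 x) := by
            apply integral_congr_ae; filter_upwards with x
            have : ∀ k : Fin 3, v x k * (2⁻¹ * pd k G2 x)
                = v x k * ∑ i : Fin 3, ∑ j : Fin 3, Wf v i j x * pd i (Wf v k j) x := by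
              intro k; rw [key k x]
            rw [Finset.sum_congr rfl fun k _ => this k]
            simp only [Fin.sum_univ_three, Finset.mul_sum]; ring
    rw [hQsum]
    have regmul : ∀ k : Fin 3, Reg (fun x => v x k * (2⁻¹ * pd k G2 x)) := by
      intro k
      have : Reg (fun x => (2⁻¹ : ℝ) * pd k G2 x) :=
        ⟨contDiff_const.mul (regG2.pd k).smooth, ((regG2.pd k).supp).mul_left⟩
      exact (hv k).mul this
    rw [integral_finset_sum _ (fun k _ => (regmul k).integrable)]
    have ibp2 : ∀ k : Fin 3, ∫ x, v x k * (2⁻¹ * pd k G2 x)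
        = - (2⁻¹ * ∫ x, Wf v k k x * G2 x) := by
      intro k
      have h1 := ibp (hv k) regG2 k
      have h2 : ∫ x, v x k * (2⁻¹ * pd k G2 x) = 2⁻¹ * ∫ x, v x k * pd k G2 x := by
        rw [← integral_const_mul]
        apply integral_congr_ae; filter_upwards with x; ring
      rw [h2]
      have h3 : ∫ x, v x k * pd k G2 x = - ∫ x, Wf v k k x * G2 x := by
        have := h1
        rw [show (∫ x, pd k (fun y => v y k) x * G2 x) = ∫ x, Wf v k k x * G2 x from rfl] at this
        linarith
      rw [h3]; ring
    have hsumJ : ∑ k : Fin 3, ∫ x, Wf v k k x * G2 x = 0 := by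
      rw [← integral_finset_sum _ (fun k _ => ((hW k k).mul regG2).integrable)]
      rw [show (0:ℝ) = ∫ (_ : E3), (0:ℝ) by simp]
      apply integral_congr_ae; filter_upwards with x
      rw [← Finset.sum_mul, hdiv x, zero_mul]
    rw [Finset.sum_congr rfl fun k _ => ibp2 k]
    simp only [Fin.sum_univ_three] at hsumJ ⊢
    linarith
  -- assemble
  rw [step1, Finset.sum_congr rfl fun i _ => Finset.sum_congr rfl fun k _ => step4 i k]
  simp only [Fin.sum_univ_three] at hA hB ⊢
  linarith

lemma claim2 (x : E3) :
    |∑ j : Fin 3, ∑ k : Fin 3, v x k * Lf v j x * Wf v k j x|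
      ≤ ‖v x‖ * Real.sqrt (∑ i : Fin 3, ∑ j : Fin 3, Wf v i j x ^ 2)
        * Real.sqrt (∑ j : Fin 3, Lf v j x ^ 2) := by
  classical
  set a : Fin 3 → ℝ := fun j => Lf v j x with hadef
  set b : Fin 3 → ℝ := fun j => ∑ k, v x k * Wf v k j x with hbdef
  have h0 : ∑ j : Fin 3, ∑ k : Fin 3, v x k * Lf v j x * Wf v k j x
      = ∑ j : Fin 3, a j * b j := by
    simp only [hadef, hbdef, Fin.sum_univ_three]; ring
  have ha2 : (0:ℝ) ≤ ∑ j : Fin 3, a j ^ 2 := Finset.sum_nonneg fun _ _ => sq_nonneg _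
  have hCS1 : (∑ j : Fin 3, a j * b j) ^ 2
      ≤ (∑ j : Fin 3, a j ^ 2) * (∑ j : Fin 3, b j ^ 2) :=
    Finset.sum_mul_sq_le_sq_mul_sq _ _ _
  have hnorm : ∑ k : Fin 3, v x k ^ 2 = ‖v x‖ ^ 2 := by
    rw [EuclideanSpace.norm_eq, Real.sq_sqrt (Finset.sum_nonneg fun _ _ => sq_nonneg _)]
    exact Finset.sum_congr rfl fun k _ => by rw [Real.norm_eq_abs, sq_abs]
  have hbsum : ∑ j : Fin 3, b j ^ 2
      ≤ ‖v x‖ ^ 2 * ∑ i : Fin 3, ∑ j : Fin 3, Wf v i j x ^ 2 := by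
    have hcomm : ∑ i : Fin 3, ∑ j : Fin 3, Wf v i j x ^ 2
        = ∑ j : Fin 3, ∑ k : Fin 3, Wf v k j x ^ 2 := Finset.sum_comm
    rw [hcomm, Finset.mul_sum]
    apply Finset.sum_le_sum
    intro j _
    calc b j ^ 2 ≤ (∑ k : Fin 3, v x k ^ 2) * (∑ k : Fin 3, Wf v k j x ^ 2) :=
          Finset.sum_mul_sq_le_sq_mul_sq _ _ _
      _ = ‖v x‖ ^ 2 * ∑ k : Fin 3, Wf v k j x ^ 2 := by rw [hnorm]
  rw [h0]
  calc |∑ j : Fin 3, a j * b j| = Real.sqrt ((∑ j : Fin 3, a j * b j) ^ 2) :=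
        (Real.sqrt_sq_eq_abs _).symm
    _ ≤ Real.sqrt ((∑ j : Fin 3, a j ^ 2) * (∑ j : Fin 3, b j ^ 2)) :=
        Real.sqrt_le_sqrt hCS1
    _ = Real.sqrt (∑ j : Fin 3, a j ^ 2) * Real.sqrt (∑ j : Fin 3, b j ^ 2) :=
        Real.sqrt_mul ha2 _
    _ ≤ Real.sqrt (∑ j : Fin 3, a j ^ 2)
        * Real.sqrt (‖v x‖ ^ 2 * ∑ i : Fin 3, ∑ j : Fin 3, Wf v i j x ^ 2) := by
        gcongr
    _ = ‖v x‖ * Real.sqrt (∑ i : Fin 3, ∑ j : Fin 3, Wf v i j x ^ 2)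
        * Real.sqrt (∑ j : Fin 3, a j ^ 2) := by
        rw [Real.sqrt_mul (sq_nonneg _), Real.sqrt_sq (norm_nonneg _)]; ring

lemma holder3 {F G H : E3 → ℝ} (hF : Continuous F) (hFs : HasCompactSupport F)
    (hG : Continuous G) (hGs : HasCompactSupport G)
    (hH : Continuous H) (hHs : HasCompactSupport H)
    (hF0 : ∀ x, 0 ≤ F x) (hG0 : ∀ x, 0 ≤ G x) (hH0 : ∀ x, 0 ≤ H x) :
    ∫ x, F x * G x * H x
      ≤ (∫ x, F x ^ 3) ^ ((1:ℝ)/3) * (∫ x, G x ^ 6) ^ ((1:ℝ)/6)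
        * (∫ x, H x ^ 2) ^ ((1:ℝ)/2) := by
  have h32 : Real.HolderConjugate 3 (3/2) := ⟨by norm_num, by norm_num, by norm_num⟩
  have h4 : Real.HolderConjugate 4 (4/3) := ⟨by norm_num, by norm_num, by norm_num⟩
  -- the G^{3/2}, H^{3/2} functions
  have hG32c : Continuous (fun x => G x ^ ((3:ℝ)/2)) :=
    hG.rpow_const (fun x => Or.inr (by norm_num))
  have hH32c : Continuous (fun x => H x ^ ((3:ℝ)/2)) :=
    hH.rpow_const (fun x => Or.inr (by norm_num))
  have hG32s : HasCompactSupport (fun x => G x ^ ((3:ℝ)/2)) :=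
    hGs.comp_left (g := fun t : ℝ => t ^ ((3:ℝ)/2)) (Real.zero_rpow (by norm_num))
  have hH32s : HasCompactSupport (fun x => H x ^ ((3:ℝ)/2)) :=
    hHs.comp_left (g := fun t : ℝ => t ^ ((3:ℝ)/2)) (Real.zero_rpow (by norm_num))
  -- first Hölder
  have step1 : ∫ x, F x * (G x * H x)
      ≤ (∫ x, F x ^ (3:ℝ)) ^ (1/(3:ℝ)) * (∫ x, (G x * H x) ^ ((3:ℝ)/2)) ^ (1/((3:ℝ)/2)) := by
    refine integral_mul_le_Lp_mul_Lq_of_nonneg h32 (ae_of_all _ hF0)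
      (ae_of_all _ fun x => mul_nonneg (hG0 x) (hH0 x)) ?_ ?_
    · exact hF.memLp_of_hasCompactSupport hFs
    · exact (hG.mul hH).memLp_of_hasCompactSupport (hGs.mul_right)
  -- split the product power
  have step2 : ∫ x, (G x * H x) ^ ((3:ℝ)/2)
      = ∫ x, G x ^ ((3:ℝ)/2) * H x ^ ((3:ℝ)/2) := by
    apply integral_congr_ae; filter_upwards with x
    exact Real.mul_rpow (hG0 x) (hH0 x)
  -- second Hölder
  have step3 : ∫ x, G x ^ ((3:ℝ)/2) * H x ^ ((3:ℝ)/2)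
      ≤ (∫ x, (G x ^ ((3:ℝ)/2)) ^ (4:ℝ)) ^ (1/(4:ℝ))
        * (∫ x, (H x ^ ((3:ℝ)/2)) ^ ((4:ℝ)/3)) ^ (1/((4:ℝ)/3)) := by
    refine integral_mul_le_Lp_mul_Lq_of_nonneg h4
      (ae_of_all _ fun x => Real.rpow_nonneg (hG0 x) _)
      (ae_of_all _ fun x => Real.rpow_nonneg (hH0 x) _) ?_ ?_
    · exact hG32c.memLp_of_hasCompactSupport hG32s
    · exact hH32c.memLp_of_hasCompactSupport hH32s
  -- simplify the iterated powers
  have eqG : ∫ x, (G x ^ ((3:ℝ)/2)) ^ (4:ℝ) = ∫ x, G x ^ 6 := by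
    apply integral_congr_ae; filter_upwards with x
    rw [← Real.rpow_natCast (G x) 6, ← Real.rpow_mul (hG0 x)]; norm_num
  have eqH : ∫ x, (H x ^ ((3:ℝ)/2)) ^ ((4:ℝ)/3) = ∫ x, H x ^ 2 := by
    apply integral_congr_ae; filter_upwards with x
    rw [← Real.rpow_natCast (H x) 2, ← Real.rpow_mul (hH0 x)]; norm_num
  have eqF : ∫ x, F x ^ (3:ℝ) = ∫ x, F x ^ 3 := by
    apply integral_congr_ae; filter_upwards with x
    rw [← Real.rpow_natCast (F x) 3]; norm_num
  rw [eqG, eqH] at step3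
  rw [eqF, step2] at step1
  -- nonnegativity of the integrals
  have hIG : (0:ℝ) ≤ ∫ x, G x ^ 6 := integral_nonneg fun x => by positivity
  have hIH : (0:ℝ) ≤ ∫ x, H x ^ 2 := integral_nonneg fun x => by positivity
  have hIF : (0:ℝ) ≤ ∫ x, F x ^ 3 := integral_nonneg fun x => pow_nonneg (hF0 x) _
  have hIGH : (0:ℝ) ≤ ∫ x, G x ^ ((3:ℝ)/2) * H x ^ ((3:ℝ)/2) :=
    integral_nonneg fun x => mul_nonneg (Real.rpow_nonneg (hG0 x) _) (Real.rpow_nonneg (hH0 x) _)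
  -- raise step3 to the power 2/3
  have step4 : (∫ x, G x ^ ((3:ℝ)/2) * H x ^ ((3:ℝ)/2)) ^ (1/((3:ℝ)/2))
      ≤ (∫ x, G x ^ 6) ^ ((1:ℝ)/6) * (∫ x, H x ^ 2) ^ ((1:ℝ)/2) := by
    have hmono := Real.rpow_le_rpow hIGH step3 (by norm_num : (0:ℝ) ≤ 1/((3:ℝ)/2))
    refine hmono.trans_eq ?_
    rw [Real.mul_rpow (Real.rpow_nonneg hIG _) (Real.rpow_nonneg hIH _),
      ← Real.rpow_mul hIG, ← Real.rpow_mul hIH]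
    norm_num
  calc ∫ x, F x * G x * H x = ∫ x, F x * (G x * H x) := by
        apply integral_congr_ae; filter_upwards with x; ring
    _ ≤ (∫ x, F x ^ 3) ^ (1/(3:ℝ))
        * (∫ x, G x ^ ((3:ℝ)/2) * H x ^ ((3:ℝ)/2)) ^ (1/((3:ℝ)/2)) := step1
    _ ≤ (∫ x, F x ^ 3) ^ (1/(3:ℝ))
        * ((∫ x, G x ^ 6) ^ ((1:ℝ)/6) * (∫ x, H x ^ 2) ^ ((1:ℝ)/2)) := by
        have := Real.rpow_nonneg hIF (1/(3:ℝ))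
        exact mul_le_mul_of_nonneg_left step4 this
    _ = (∫ x, F x ^ 3) ^ ((1:ℝ)/3) * (∫ x, G x ^ 6) ^ ((1:ℝ)/6)
        * (∫ x, H x ^ 2) ^ ((1:ℝ)/2) := by ring

end TLH


set_option maxHeartbeats 16000000 in
open TLH in
/-- Hölder bound on the trilinear integral. -/
theorem trilinear_holder_bound
    (v : EuclideanSpace ℝ (Fin 3) → EuclideanSpace ℝ (Fin 3))
    (hsmooth : ContDiff ℝ (⊤ : ℕ∞) v) (hsupp : HasCompactSupport v)
    (hdiv : ∀ x, ∑ i : Fin 3, pd i (fun y => v y i) x = 0) :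
    |∫ x, ∑ i : Fin 3, ∑ j : Fin 3, ∑ k : Fin 3,
        pd i (fun y => v y j) x * pd i (fun y => v y k) x * pd k (fun y => v y j) x|
      ≤ (∫ x, ‖v x‖ ^ 3) ^ ((1 : ℝ) / 3)
        * (∫ x, Real.sqrt (∑ i : Fin 3, ∑ j : Fin 3, (pd i (fun y => v y j) x) ^ 2) ^ 6)
            ^ ((1 : ℝ) / 6)
        * (∫ x, ∑ j : Fin 3,
            (∑ i : Fin 3, pd i (fun y => pd i (fun z => v z j) y) x) ^ 2) ^ ((1 : ℝ) / 2) := by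
  classical
  show |∫ x, ∑ i : Fin 3, ∑ j : Fin 3, ∑ k : Fin 3, Wf v i j x * Wf v i k x * Wf v k j x|
      ≤ (∫ x, ‖v x‖ ^ 3) ^ ((1 : ℝ) / 3)
        * (∫ x, Real.sqrt (∑ i : Fin 3, ∑ j : Fin 3, Wf v i j x ^ 2) ^ 6) ^ ((1 : ℝ) / 6)
        * (∫ x, ∑ j : Fin 3, Lf v j x ^ 2) ^ ((1 : ℝ) / 2)
  have hv : ∀ j : Fin 3, Reg (fun y => v y j) := by
    intro j
    constructor
    · have h1 : ContDiff ℝ (⊤ : ℕ∞) ((EuclideanSpace.proj j : EuclideanSpace ℝ (Fin 3) →L[ℝ] ℝ) ∘ v) :=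
        (EuclideanSpace.proj j).contDiff.comp hsmooth
      exact h1
    · exact hsupp.comp_left (g := fun w : EuclideanSpace ℝ (Fin 3) => w j) rfl
  have hW : ∀ i j, Reg (Wf v i j) := regW hv
  have hL : ∀ j, Reg (Lf v j) := regL hv
  have key := claim1 hv hdiv
  -- the functions in the Hölder bound
  set F : E3 → ℝ := fun x => ‖v x‖ with hFdef
  set G : E3 → ℝ := fun x => Real.sqrt (∑ i : Fin 3, ∑ j : Fin 3, Wf v i j x ^ 2) with hGdef
  set H : E3 → ℝ := fun x => Real.sqrt (∑ j : Fin 3, Lf v j x ^ 2) with hHdef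
  have hSW : Reg (fun x => ∑ i : Fin 3, ∑ j : Fin 3, Wf v i j x ^ 2) := by
    have h := Reg.sum (F := fun i => fun x => ∑ j : Fin 3, Wf v i j x * Wf v i j x)
      Finset.univ (fun i _ => Reg.sum Finset.univ (fun j _ => (hW i j).mul (hW i j)))
    have heq : (fun x => ∑ i : Fin 3, ∑ j : Fin 3, Wf v i j x ^ 2)
        = (fun x => ∑ i : Fin 3, ∑ j : Fin 3, Wf v i j x * Wf v i j x) := by
      funext x
      exact Finset.sum_congr rfl fun i _ => Finset.sum_congr rfl fun j _ => pow_two _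
    rw [heq]; exact h
  have hSL : Reg (fun x => ∑ j : Fin 3, Lf v j x ^ 2) := by
    have h := Reg.sum (F := fun j => fun x => Lf v j x * Lf v j x)
      Finset.univ (fun j _ => (hL j).mul (hL j))
    have heq : (fun x => ∑ j : Fin 3, Lf v j x ^ 2)
        = (fun x => ∑ j : Fin 3, Lf v j x * Lf v j x) := by
      funext x
      exact Finset.sum_congr rfl fun j _ => pow_two _
    rw [heq]; exact h
  have hFc : Continuous F := hsmooth.continuous.norm
  have hFs : HasCompactSupport F := hsupp.norm
  have hGc : Continuous G := Real.continuous_sqrt.comp hSW.cont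
  have hGs : HasCompactSupport G := hSW.supp.comp_left Real.sqrt_zero
  have hHc : Continuous H := Real.continuous_sqrt.comp hSL.cont
  have hHs : HasCompactSupport H := hSL.supp.comp_left Real.sqrt_zero
  have hF0 : ∀ x, 0 ≤ F x := fun x => norm_nonneg _
  have hG0 : ∀ x, 0 ≤ G x := fun x => Real.sqrt_nonneg _
  have hH0 : ∀ x, 0 ≤ H x := fun x => Real.sqrt_nonneg _
  -- the integrand after IBP
  set S : E3 → ℝ := fun x => ∑ j : Fin 3, ∑ k : Fin 3, v x k * Lf v j x * Wf v k j x with hSdef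
  have regS : Reg S := Reg.sum Finset.univ (fun j _ => Reg.sum Finset.univ
    (fun k _ => ((hv k).mul (hL j)).mul (hW k j)))
  have hFGHint : Integrable (fun x => F x * G x * H x) :=
    ((hFc.mul hGc).mul hHc).integrable_of_hasCompactSupport (hFs.mul_right.mul_right)
  have hbound : ∫ x, |S x| ≤ ∫ x, F x * G x * H x := by
    apply integral_mono regS.integrable.abs hFGHint
    intro x
    exact claim2 x
  have habs : |∫ x, S x| ≤ ∫ x, |S x| := by
    rw [show |∫ x, S x| = ‖∫ x, S x‖ from (Real.norm_eq_abs _).symm]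
    exact (norm_integral_le_integral_norm _).trans_eq
      (integral_congr_ae (by filter_upwards with x; exact Real.norm_eq_abs _))
  have hholder := holder3 hFc hFs hGc hGs hHc hHs hF0 hG0 hH0
  have hH2 : ∫ x, H x ^ 2 = ∫ x, ∑ j : Fin 3, Lf v j x ^ 2 := by
    apply integral_congr_ae; filter_upwards with x
    exact Real.sq_sqrt (Finset.sum_nonneg fun _ _ => sq_nonneg _)
  calc |∫ x, ∑ i : Fin 3, ∑ j : Fin 3, ∑ k : Fin 3,
        Wf v i j x * Wf v i k x * Wf v k j x|
      = |∫ x, S x| := by rw [key]; rw [abs_neg]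
    _ ≤ ∫ x, |S x| := habs
    _ ≤ ∫ x, F x * G x * H x := hbound
    _ ≤ (∫ x, F x ^ 3) ^ ((1:ℝ)/3) * (∫ x, G x ^ 6) ^ ((1:ℝ)/6)
        * (∫ x, H x ^ 2) ^ ((1:ℝ)/2) := hholder
    _ = (∫ x, F x ^ 3) ^ ((1:ℝ)/3) * (∫ x, G x ^ 6) ^ ((1:ℝ)/6)
        * (∫ x, ∑ j : Fin 3, Lf v j x ^ 2) ^ ((1 : ℝ) / 2) := by rw [hH2]
end

section
/- In dimension 2, for any smooth compactly supported divergence-free vector field v : ℝ² → ℝ², the trilinear integral vanishes: ∫_{ℝ²} ∂ᵢvⱼ ∂ᵢv_k ∂_k vⱼ dV = 0, where indices range over {1,2} and repeated indices are summed. -/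
open MeasureTheory

noncomputable def pd2 (i : Fin 2) (f : EuclideanSpace ℝ (Fin 2) → ℝ)
    (x : EuclideanSpace ℝ (Fin 2)) : ℝ :=
  fderiv ℝ f x (EuclideanSpace.single i 1)

/-- in two dimensions, the trilinear vortex-stretching integral vanishes. -/
theorem trilinear_vanishes_2d
    (v : EuclideanSpace ℝ (Fin 2) → EuclideanSpace ℝ (Fin 2))
    (hsmooth : ContDiff ℝ (⊤ : ℕ∞) v) (hsupp : HasCompactSupport v)
    (hdiv : ∀ x, ∑ i : Fin 2, pd2 i (fun y => v y i) x = 0) :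
    ∫ x, ∑ i : Fin 2, ∑ j : Fin 2, ∑ k : Fin 2,
        pd2 i (fun y => v y j) x * pd2 i (fun y => v y k) x * pd2 k (fun y => v y j) x
      = 0 := by
  have h : ∀ x, (∑ i : Fin 2, ∑ j : Fin 2, ∑ k : Fin 2,
      pd2 i (fun y => v y j) x * pd2 i (fun y => v y k) x * pd2 k (fun y => v y j) x) = 0 := by
    intro x
    have hd := hdiv x
    simp only [Fin.sum_univ_two] at hd ⊢
    set a := pd2 0 (fun y => v y 0) x
    set b := pd2 0 (fun y => v y 1) x
    set c := pd2 1 (fun y => v y 0) x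
    set d := pd2 1 (fun y => v y 1) x
    linear_combination (a^2 + b^2 + c^2 + d^2 - (a*d - b*c)) * hd
  simp only [h, integral_zero]
end
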